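/- Let S be an invertible 2×2 matrix-valued function with S_{1j}, S_{2j} depending only on q_j (Stäckel matrix), and define H_k = Σ_{j=1}^2 (S^{-1})_{jk} (p_j^2 + U_j(q_j)) for k = 1, 2, where U_j depends only on q_j. Then {H_1, H_2} = 0 with respect to the canonical Poisson bracket on ℝ^4 in coordinates (q1, q2, p1, p2). -/

import Mathlib

/-- Canonical Poisson bracket on ℝ⁴ with coordinates (q1, q2, p1, p2). -/
noncomputable def pb (f g : ℝ → ℝ → ℝ → ℝ → ℝ) (q1 q2 p1 p2 : ℝ) : ℝ :=
    deriv (fun t => f t q2 p1 p2) q1 * deriv (fun t => g q1 q2 t p2) p1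
  + deriv (fun t => f q1 t p1 p2) q2 * deriv (fun t => g q1 q2 p1 t) p2
  - deriv (fun t => f q1 q2 t p2) p1 * deriv (fun t => g t q2 p1 p2) q1
  - deriv (fun t => f q1 q2 p1 t) p2 * deriv (fun t => g q1 t p1 p2) q2

/-- Two-dimensional Stäckel theorem: the Stäckel integrals are in involution. -/
theorem stmt10 (s11 s21 u1 s12 s22 u2 : ℝ → ℝ)
    (hs11 : ContDiff ℝ (⊤ : ℕ∞) s11) (hs21 : ContDiff ℝ (⊤ : ℕ∞) s21) (hu1 : ContDiff ℝ (⊤ : ℕ∞) u1)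
    (hs12 : ContDiff ℝ (⊤ : ℕ∞) s12) (hs22 : ContDiff ℝ (⊤ : ℕ∞) s22) (hu2 : ContDiff ℝ (⊤ : ℕ∞) u2)
    (hdet : ∀ q1 q2, s11 q1 * s22 q2 - s12 q2 * s21 q1 ≠ 0) :
    ∀ q1 q2 p1 p2 : ℝ,
      pb (fun q1 q2 p1 p2 =>
            (s22 q2 * (p1 ^ 2 + u1 q1) - s21 q1 * (p2 ^ 2 + u2 q2))
              / (s11 q1 * s22 q2 - s12 q2 * s21 q1))
         (fun q1 q2 p1 p2 =>
            (-(s12 q2) * (p1 ^ 2 + u1 q1) + s11 q1 * (p2 ^ 2 + u2 q2))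
              / (s11 q1 * s22 q2 - s12 q2 * s21 q1)) q1 q2 p1 p2 = 0 := by
  have hd : ∀ (f : ℝ → ℝ), ContDiff ℝ (⊤ : ℕ∞) f → ∀ x : ℝ, HasDerivAt f (deriv f x) x :=
    fun f hf x => (hf.differentiable (by simp) x).hasDerivAt
  intro q1 q2 p1 p2
  set a := p1 ^ 2 + u1 q1 with ha
  set b := p2 ^ 2 + u2 q2 with hb
  set D := s11 q1 * s22 q2 - s12 q2 * s21 q1 with hDdef
  have hD : D ≠ 0 := hdet q1 q2
  -- abbreviations for derivative values
  set d11 := deriv s11 q1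
  set d21 := deriv s21 q1
  set d12 := deriv s12 q2
  set d22 := deriv s22 q2
  set du1 := deriv u1 q1
  set du2 := deriv u2 q2
  -- p1-derivatives
  have h1p1 : deriv (fun t => (s22 q2 * (t ^ 2 + u1 q1) - s21 q1 * (p2 ^ 2 + u2 q2)) / D) p1
      = 2 * p1 * s22 q2 / D := by
    have h : HasDerivAt (fun t : ℝ => (s22 q2 * (t ^ 2 + u1 q1) - s21 q1 * (p2 ^ 2 + u2 q2)) / D)
        (2 * p1 * s22 q2 / D) p1 := by
      have h2 := ((((hasDerivAt_pow 2 p1).add_const (u1 q1)).const_mul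
        (s22 q2)).sub_const (s21 q1 * (p2 ^ 2 + u2 q2))).div_const D
      convert h2 using 1
      rfl
      rfl
      push_cast; ring
    exact h.deriv
  have h2p1 : deriv (fun t => (-(s12 q2) * (t ^ 2 + u1 q1) + s11 q1 * (p2 ^ 2 + u2 q2)) / D) p1
      = -(2 * p1 * s12 q2) / D := by
    have h : HasDerivAt (fun t : ℝ => (-(s12 q2) * (t ^ 2 + u1 q1) + s11 q1 * (p2 ^ 2 + u2 q2)) / D)
        (-(2 * p1 * s12 q2) / D) p1 := by
      have h2 := ((((hasDerivAt_pow 2 p1).add_const (u1 q1)).const_mul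
        (-(s12 q2))).add_const (s11 q1 * (p2 ^ 2 + u2 q2))).div_const D
      convert h2 using 1
      rfl
      rfl
      push_cast; ring
    exact h.deriv
  -- p2-derivatives
  have h1p2 : deriv (fun t => (s22 q2 * (p1 ^ 2 + u1 q1) - s21 q1 * (t ^ 2 + u2 q2)) / D) p2
      = -(2 * p2 * s21 q1) / D := by
    have h : HasDerivAt (fun t : ℝ => (s22 q2 * (p1 ^ 2 + u1 q1) - s21 q1 * (t ^ 2 + u2 q2)) / D)
        (-(2 * p2 * s21 q1) / D) p2 := by
      have h2 := (((((hasDerivAt_pow 2 p2).add_const (u2 q2)).const_mul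
        (s21 q1)).const_sub (s22 q2 * (p1 ^ 2 + u1 q1)))).div_const D
      convert h2 using 1
      rfl
      rfl
      push_cast; ring
    exact h.deriv
  have h2p2 : deriv (fun t => (-(s12 q2) * (p1 ^ 2 + u1 q1) + s11 q1 * (t ^ 2 + u2 q2)) / D) p2
      = 2 * p2 * s11 q1 / D := by
    have h : HasDerivAt (fun t : ℝ => (-(s12 q2) * (p1 ^ 2 + u1 q1) + s11 q1 * (t ^ 2 + u2 q2)) / D)
        (2 * p2 * s11 q1 / D) p2 := by
      have h2 := ((((hasDerivAt_pow 2 p2).add_const (u2 q2)).const_mul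
        (s11 q1)).const_add (-(s12 q2) * (p1 ^ 2 + u1 q1))).div_const D
      convert h2 using 1
      rfl
      rfl
      push_cast; ring
    exact h.deriv
  -- q1-derivatives
  have hDen1 : HasDerivAt (fun t => s11 t * s22 q2 - s12 q2 * s21 t)
      (d11 * s22 q2 - s12 q2 * d21) q1 :=
    ((hd s11 hs11 q1).mul_const (s22 q2)).sub ((hd s21 hs21 q1).const_mul (s12 q2))
  have h1q1 : deriv (fun t => (s22 q2 * (p1 ^ 2 + u1 t) - s21 t * (p2 ^ 2 + u2 q2))
        / (s11 t * s22 q2 - s12 q2 * s21 t)) q1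
      = ((s22 q2 * du1 - d21 * b) * D - (s22 q2 * a - s21 q1 * b) * (d11 * s22 q2 - s12 q2 * d21))
        / D ^ 2 := by
    have hN : HasDerivAt (fun t => s22 q2 * (p1 ^ 2 + u1 t) - s21 t * (p2 ^ 2 + u2 q2))
        (s22 q2 * du1 - d21 * b) q1 :=
      (((hd u1 hu1 q1).const_add (p1 ^ 2)).const_mul (s22 q2)).sub
        ((hd s21 hs21 q1).mul_const (p2 ^ 2 + u2 q2))
    exact (hN.div hDen1 hD).deriv
  have h2q1 : deriv (fun t => (-(s12 q2) * (p1 ^ 2 + u1 t) + s11 t * (p2 ^ 2 + u2 q2))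
        / (s11 t * s22 q2 - s12 q2 * s21 t)) q1
      = ((-(s12 q2) * du1 + d11 * b) * D - (-(s12 q2) * a + s11 q1 * b) * (d11 * s22 q2 - s12 q2 * d21))
        / D ^ 2 := by
    have hN : HasDerivAt (fun t => -(s12 q2) * (p1 ^ 2 + u1 t) + s11 t * (p2 ^ 2 + u2 q2))
        (-(s12 q2) * du1 + d11 * b) q1 :=
      (((hd u1 hu1 q1).const_add (p1 ^ 2)).const_mul (-(s12 q2))).add
        ((hd s11 hs11 q1).mul_const (p2 ^ 2 + u2 q2))
    exact (hN.div hDen1 hD).deriv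
  -- q2-derivatives
  have hDen2 : HasDerivAt (fun t => s11 q1 * s22 t - s12 t * s21 q1)
      (s11 q1 * d22 - d12 * s21 q1) q2 :=
    ((hd s22 hs22 q2).const_mul (s11 q1)).sub ((hd s12 hs12 q2).mul_const (s21 q1))
  have h1q2 : deriv (fun t => (s22 t * (p1 ^ 2 + u1 q1) - s21 q1 * (p2 ^ 2 + u2 t))
        / (s11 q1 * s22 t - s12 t * s21 q1)) q2
      = ((d22 * a - s21 q1 * du2) * D - (s22 q2 * a - s21 q1 * b) * (s11 q1 * d22 - d12 * s21 q1))
        / D ^ 2 := by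
    have hN : HasDerivAt (fun t => s22 t * (p1 ^ 2 + u1 q1) - s21 q1 * (p2 ^ 2 + u2 t))
        (d22 * a - s21 q1 * du2) q2 :=
      ((hd s22 hs22 q2).mul_const (p1 ^ 2 + u1 q1)).sub
        (((hd u2 hu2 q2).const_add (p2 ^ 2)).const_mul (s21 q1))
    exact (hN.div hDen2 hD).deriv
  have h2q2 : deriv (fun t => (-(s12 t) * (p1 ^ 2 + u1 q1) + s11 q1 * (p2 ^ 2 + u2 t))
        / (s11 q1 * s22 t - s12 t * s21 q1)) q2
      = ((-d12 * a + s11 q1 * du2) * D - (-(s12 q2) * a + s11 q1 * b) * (s11 q1 * d22 - d12 * s21 q1))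
        / D ^ 2 := by
    have hN : HasDerivAt (fun t => -(s12 t) * (p1 ^ 2 + u1 q1) + s11 q1 * (p2 ^ 2 + u2 t))
        (-d12 * a + s11 q1 * du2) q2 := by
      have := (((hd s12 hs12 q2).neg).mul_const (p1 ^ 2 + u1 q1)).add
        (((hd u2 hu2 q2).const_add (p2 ^ 2)).const_mul (s11 q1))
      convert this using 1
      all_goals rfl
    exact (hN.div hDen2 hD).deriv
  unfold pb
  rw [h1p1, h2p1, h1p2, h2p2, h1q1, h2q1, h1q2, h2q2]
  field_simp
  ring
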